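/- Let X be a graph and α, β ≥ 0. If e, e', e'' are oriented edges with e'' in the cone of parameter α around e' and e' in the cone of parameter β around e, then e'' is in the cone of parameter α + β around e. -/

import Mathlib

/-- A graph: vertices, oriented edges, origin/terminus maps, and a
fixed-point-free edge-reversing involution. -/
structure MGraph where
  V : Type
  E : Type
  o : E → V
  t : E → V
  rev : E → E
  rev_o : ∀ e, o (rev e) = t e
  rev_t : ∀ e, t (rev e) = o e
  rev_rev : ∀ e, rev (rev e) = e
  rev_ne : ∀ e, rev e ≠ e

namespace MGraph

variable (X : MGraph)

/-- A walk from `x` to `y` given by a list of consecutive edges. -/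
def IsWalk : List X.E → X.V → X.V → Prop
  | [], x, y => x = y
  | e :: es, x, y => X.o e = x ∧ IsWalk es (X.t e) y

/-- The vertices visited by a walk starting at `x`. -/
def walkVerts : X.V → List X.E → List X.V
  | x, [] => [x]
  | x, e :: es => x :: walkVerts (X.t e) es

/-- The graph metric (length of each edge is 1), valued in `ℕ∞`. -/
noncomputable def dist (x y : X.V) : ℕ∞ :=
  sInf {n : ℕ∞ | ∃ es, X.IsWalk es x y ∧ (es.length : ℕ∞) = n}

/-- The distance from `x` to `y` in the graph with the vertex `v` removed. -/
noncomputable def delDist (v x y : X.V) : ℕ∞ :=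
  sInf {n : ℕ∞ | ∃ es, X.IsWalk es x y ∧ v ∉ X.walkVerts x es ∧ (es.length : ℕ∞) = n}

/-- The angle at `v = t e1 = o e2` between two edges `e1, e2`: the distance
from `o e1` to `t e2` in the graph with the vertex `t e1` removed. -/
noncomputable def angle (e1 e2 : X.E) : ℕ∞ :=
  X.delDist (X.t e1) (X.o e1) (X.t e2)

/-- A geodesic is a walk whose length realizes the distance. -/
def IsGeodesic (es : List X.E) (x y : X.V) : Prop :=
  X.IsWalk es x y ∧ (es.length : ℕ∞) = X.dist x y

/-- `∠_c(x1,x2) > θ` : there are edges `e1, e2` with `t e1 = o e2 = c`, each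
lying on a geodesic between `c` and `x_i`, making an angle `> θ` at `c`. -/
def AngleGT (c x1 x2 : X.V) (θ : ℕ∞) : Prop :=
  ∃ (e1 e2 : X.E) (es1 es2 : List X.E), X.t e1 = c ∧ X.o e2 = c ∧
    X.IsGeodesic (X.rev e1 :: es1) c x1 ∧ X.IsGeodesic (e2 :: es2) c x2 ∧
    θ < X.angle e1 e2

/-- All pairs of consecutive edges of a walk make an angle at most `θ`. -/
def AngleBounded (θ : ℕ∞) : List X.E → Prop
  | [] => True
  | [_] => True
  | e :: e' :: es => X.angle e e' ≤ θ ∧ AngleBounded θ (e' :: es)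

/-- `v` is a vertex of the cone of parameter `θ` around the oriented edge `e`:
it lies on a path starting at `o e` by the edge `e`, of length at most `θ`,
whose consecutive edges make angles at most `θ`. -/
def InConeV (θ : ℕ∞) (e : X.E) (v : X.V) : Prop :=
  ∃ (es : List X.E) (y : X.V), X.IsWalk (e :: es) (X.o e) y ∧
    ((e :: es).length : ℕ∞) ≤ θ ∧ X.AngleBounded θ (e :: es) ∧
    v ∈ X.walkVerts (X.o e) (e :: es)

/-- `ε` is an edge of the cone of parameter `θ` around the oriented edge `e`. -/
def InConeE (θ : ℕ∞) (e ε : X.E) : Prop :=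
  ∃ (es : List X.E) (y : X.V), X.IsWalk (e :: es) (X.o e) y ∧
    ((e :: es).length : ℕ∞) ≤ θ ∧ X.AngleBounded θ (e :: es) ∧
    (ε ∈ e :: es ∨ X.rev ε ∈ e :: es)

/-- A graph is fine if for each edge `e` and each `L`, only finitely many
edges arrive at `o e` making an angle at most `L` with `e`. -/
def Fine : Prop :=
  ∀ (e : X.E) (L : ℕ), {e' : X.E | X.t e' = X.o e ∧ X.angle e' e ≤ (L : ℕ∞)}.Finite

/-- δ-hyperbolicity: geodesic triangles are δ-thin. -/
def Hyperbolic (δ : ℕ) : Prop :=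
  ∀ (a b c : X.V) (p q r : List X.E),
    X.IsGeodesic p a b → X.IsGeodesic q b c → X.IsGeodesic r a c →
    ∀ v ∈ X.walkVerts a p, ∃ w, (w ∈ X.walkVerts b q ∨ w ∈ X.walkVerts a r) ∧
      X.dist v w ≤ (δ : ℕ∞)

/-- The four point inequality form of δ-hyperbolicity. -/
def FourPoint (δ : ℕ) : Prop :=
  ∀ a x y y' : X.V,
    X.dist a x + X.dist y y' ≤
      max (X.dist a y + X.dist y' x) (X.dist a y' + X.dist y x) + (δ : ℕ∞)

/-- Connectedness. -/
def Connected : Prop := ∀ x y : X.V, ∃ es, X.IsWalk es x y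

/-- `t` is on an `α`-geodesic between `x` and `a`. -/
def OnAlphaGeod (α : ℕ∞) (t x a : X.V) : Prop :=
  X.dist x t + X.dist t a ≤ X.dist x a + α

/-- The set `𝓔_{a,x}(ρ)` of edges at distance `ρ` from `a` lying on
geodesics between `a` and `x`. -/
def GeodEdgeAt (a x : X.V) (ρ : ℕ∞) (e : X.E) : Prop :=
  X.dist a (X.o e) = ρ ∧ ∃ es, (X.IsGeodesic es a x ∨ X.IsGeodesic es x a) ∧ e ∈ es

/-- The set `U_α[a,x]` of points on `α`-conical-geodesics between `x` and `a`. -/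
def ConicalSet (α : ℕ) (a x : X.V) : Set X.V :=
  {t | X.OnAlphaGeod (α : ℕ∞) t x a ∧ X.dist a t ≤ X.dist a x ∧
       ∀ e, X.GeodEdgeAt a x (X.dist a t) e → X.InConeV ((40 * α : ℕ) : ℕ∞) e t}

end MGraph

/-! Follow the walk of the `β`-cone around `e` up to `e'` and continue along the walk of the
`α`-cone around `e'`. If the first walk crosses `e'` backwards, drop the back-and-forth
`rev e', e'`: distances in `X` minus a vertex satisfy the triangle inequality, so the angle at
the new junction is at most `β + α`. Lengths add up in the same way. -/

namespace MGraph

variable {X : MGraph}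

lemma isWalk_append {l₁ l₂ : List X.E} {x y : X.V} :
    X.IsWalk (l₁ ++ l₂) x y ↔ ∃ z, X.IsWalk l₁ x z ∧ X.IsWalk l₂ z y := by
  induction l₁ generalizing x with
  | nil => simp [IsWalk]
  | cons a l ih => simp [IsWalk, ih, and_assoc]

lemma mem_walkVerts_self (x : X.V) (l : List X.E) : x ∈ X.walkVerts x l := by
  cases l <;> simp [walkVerts]

lemma walkVerts_append_subset {l₁ l₂ : List X.E} {x z : X.V} (h : X.IsWalk l₁ x z) :
    X.walkVerts x (l₁ ++ l₂) ⊆ X.walkVerts x l₁ ++ X.walkVerts z l₂ := by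
  induction l₁ generalizing x with
  | nil => cases h; simp
  | cons a l ih => exact List.cons_subset_cons x (ih h.2)

lemma delDist_le_length {v x y : X.V} {es : List X.E} (hw : X.IsWalk es x y)
    (hv : v ∉ X.walkVerts x es) : X.delDist v x y ≤ es.length :=
  sInf_le ⟨es, hw, hv, rfl⟩

lemma exists_walk_length_eq_delDist {v x y : X.V} (h : X.delDist v x y ≠ ⊤) :
    ∃ es, X.IsWalk es x y ∧ v ∉ X.walkVerts x es ∧ (es.length : ℕ∞) = X.delDist v x y := by
  have hne :
      {n : ℕ∞ | ∃ es, X.IsWalk es x y ∧ v ∉ X.walkVerts x es ∧ (es.length : ℕ∞) = n}.Nonempty :=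
    Set.nonempty_iff_ne_empty.2 fun hempty => h (by rw [delDist, hempty, sInf_empty])
  exact csInf_mem hne

lemma delDist_self_left (v y : X.V) : X.delDist v v y = ⊤ := by
  rw [delDist, sInf_eq_top]
  rintro _ ⟨es, -, hv, -⟩
  exact absurd (X.mem_walkVerts_self v es) hv

lemma delDist_triangle (v x y z : X.V) :
    X.delDist v x z ≤ X.delDist v x y + X.delDist v y z := by
  by_cases hxy : X.delDist v x y = ⊤
  · simp [hxy]
  by_cases hyz : X.delDist v y z = ⊤
  · simp [hyz]
  obtain ⟨p, hp, hvp, hpl⟩ := exists_walk_length_eq_delDist hxy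
  obtain ⟨q, hq, hvq, hql⟩ := exists_walk_length_eq_delDist hyz
  rw [← hpl, ← hql, ← Nat.cast_add, ← List.length_append]
  refine delDist_le_length (isWalk_append.2 ⟨y, hp, hq⟩) fun hv => ?_
  rcases List.mem_append.1 (walkVerts_append_subset hp hv) with hv | hv
  exacts [hvp hv, hvq hv]

lemma angle_eq_top_of_isLoop {e : X.E} (he : X.t e = X.o e) (g : X.E) : X.angle e g = ⊤ := by
  rw [angle, he, delDist_self_left]

lemma angle_rev_self {e : X.E} (he : X.o e ≠ X.t e) : X.angle (X.rev e) e = 0 := by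
  refine nonpos_iff_eq_zero.1 ?_
  have := X.delDist_le_length (v := X.o e) (es := []) (rfl : X.IsWalk [] (X.t e) (X.t e))
    (by simpa [walkVerts] using he)
  simpa [angle, X.rev_t, X.rev_o] using this

/-- Both angles are measured in the graph with the common vertex `t f = t e` removed. -/
lemma angle_le_angle_rev_add {f e : X.E} (h : X.t f = X.t e) (g : X.E) :
    X.angle f g ≤ X.angle f (X.rev e) + X.angle e g := by
  simpa only [angle, X.rev_t, h] using X.delDist_triangle (X.t e) (X.o f) (X.o e) (X.t g)

lemma angleBounded_iff_isChain {θ : ℕ∞} :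
    ∀ l : List X.E, X.AngleBounded θ l ↔ l.IsChain (fun a b => X.angle a b ≤ θ)
  | [] => by simp [AngleBounded]
  | [_] => by simp [AngleBounded]
  | a :: b :: l => by simp [AngleBounded, angleBounded_iff_isChain (b :: l)]

def IsConeWalk (θ : ℕ) (x : X.V) (p : List X.E) : Prop :=
  (∃ y, X.IsWalk p x y) ∧ p.length ≤ θ ∧ p.IsChain (fun a b => X.angle a b ≤ θ)

lemma inConeE_iff {θ : ℕ} {e ε : X.E} :
    X.InConeE θ e ε ↔
      ∃ es, X.IsConeWalk θ (X.o e) (e :: es) ∧ (ε ∈ e :: es ∨ X.rev ε ∈ e :: es) := by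
  simp only [InConeE, IsConeWalk, angleBounded_iff_isChain, Nat.cast_le]
  constructor
  · rintro ⟨es, y, hw, hl, hc, hm⟩
    exact ⟨es, ⟨⟨y, hw⟩, hl, hc⟩, hm⟩
  · rintro ⟨es, ⟨⟨y, hw⟩, hl, hc⟩, hm⟩
    exact ⟨es, y, hw, hl, hc, hm⟩

variable {α β : ℕ} {x : X.V} {e' g : X.E} {l post es : List X.E}

lemma IsConeWalk.mono {θ θ' : ℕ} {p : List X.E} (hp : X.IsConeWalk θ x p) (h : θ ≤ θ') :
    X.IsConeWalk θ' x p :=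
  ⟨hp.1, hp.2.1.trans h, hp.2.2.imp fun _ _ hab => hab.trans (Nat.cast_le.2 h)⟩

lemma IsConeWalk.splice (h₂ : X.IsConeWalk β x (l ++ e' :: post))
    (h₁ : X.IsConeWalk α (X.o e') (e' :: es)) : X.IsConeWalk (α + β) x (l ++ e' :: es) := by
  obtain ⟨⟨y₂, hw₂⟩, hl₂, hc₂⟩ := h₂
  obtain ⟨⟨y₁, hw₁⟩, hl₁, hc₁⟩ := h₁
  obtain ⟨z, hwl, hz⟩ := isWalk_append.1 hw₂
  refine ⟨⟨y₁, isWalk_append.2 ⟨z, hwl, hz.1 ▸ hw₁⟩⟩, ?_, ?_⟩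
  · simp only [List.length_append, List.length_cons] at hl₂ hl₁ ⊢
    omega
  · rw [List.isChain_split] at hc₂ ⊢
    exact ⟨hc₂.1.imp fun _ _ h => h.trans (Nat.cast_le.2 (by omega)),
      hc₁.imp fun _ _ h => h.trans (Nat.cast_le.2 (by omega))⟩

/-- The back-and-forth `rev e', e'` is cut out: the new angle at `t e'` is at most the sum of
the two angles it replaces. -/
lemma IsConeWalk.splice_rev (h₂ : X.IsConeWalk β x (l ++ X.rev e' :: post)) (hl : l ≠ [])
    (h₁ : X.IsConeWalk α (X.o e') (e' :: g :: es)) : X.IsConeWalk (α + β) x (l ++ g :: es) := by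
  obtain ⟨l, f, rfl⟩ := (List.eq_nil_or_concat' l).resolve_left hl
  obtain ⟨⟨y₂, hw₂⟩, hl₂, hc₂⟩ := h₂
  obtain ⟨⟨y₁, hw₁⟩, hl₁, hc₁⟩ := h₁
  obtain ⟨z, hwl, hz⟩ := isWalk_append.1 hw₂
  obtain ⟨_, -, hf⟩ := isWalk_append.1 hwl
  have htf : X.t f = X.t e' := (hf.2 : X.t f = z).trans (hz.1.symm.trans (X.rev_o e'))
  refine ⟨⟨y₁, isWalk_append.2 ⟨z, hwl, ?_⟩⟩, ?_, ?_⟩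
  · rw [← hz.1, X.rev_o]
    exact hw₁.2
  · simp only [List.length_append, List.length_cons, List.length_nil] at hl₂ hl₁ ⊢
    omega
  · simp only [List.append_assoc, List.singleton_append, List.isChain_append_cons_cons,
      List.isChain_cons_cons] at hc₂ hc₁ ⊢
    refine ⟨hc₂.1.imp fun _ _ h => h.trans (Nat.cast_le.2 (by omega)), ?_,
      hc₁.2.imp fun _ _ h => h.trans (Nat.cast_le.2 (by omega))⟩
    calc X.angle f g ≤ X.angle f (X.rev e') + X.angle e' g := angle_le_angle_rev_add htf g
      _ ≤ β + α := add_le_add hc₂.2.1 hc₁.1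
      _ = ((α + β : ℕ) : ℕ∞) := by push_cast; ring

/-- The turn from `rev e'` back to `e'` has angle `0`, as `e'` cannot be a loop: a loop makes
an infinite angle with every edge. -/
lemma IsConeWalk.rev_cons (hβ : 1 ≤ β) (h₁ : X.IsConeWalk α (X.o e') (e' :: g :: es)) :
    X.IsConeWalk (α + β) (X.t e') (X.rev e' :: e' :: g :: es) := by
  obtain ⟨⟨y₁, hw₁⟩, hl₁, hc₁⟩ := h₁
  have hloop : X.o e' ≠ X.t e' := fun h => by
    simpa [angle_eq_top_of_isLoop h.symm] using (List.isChain_cons_cons.1 hc₁).1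
  refine ⟨⟨y₁, X.rev_o e', by rwa [X.rev_t]⟩, ?_, ?_⟩
  · simp only [List.length_cons] at hl₁ ⊢
    omega
  · rw [List.isChain_cons_cons, angle_rev_self hloop]
    exact ⟨zero_le, hc₁.imp fun _ _ h => h.trans (Nat.cast_le.2 (by omega))⟩

lemma exists_isConeWalk_superset {e : X.E} {es₁ es₂ : List X.E}
    (h₂ : X.IsConeWalk β (X.o e) (e :: es₂)) (he' : e' ∈ e :: es₂ ∨ X.rev e' ∈ e :: es₂)
    (h₁ : X.IsConeWalk α (X.o e') (e' :: es₁)) (hes₁ : es₁ ≠ []) :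
    ∃ es, X.IsConeWalk (α + β) (X.o e) (e :: es) ∧ es₁ ⊆ e :: es := by
  rcases he' with he' | he' <;> obtain ⟨l, post, hsplit⟩ := List.append_of_mem he'
  · rcases l with _ | ⟨e₀, l⟩ <;> simp only [List.nil_append, List.cons_append,
      List.cons.injEq] at hsplit <;> obtain ⟨rfl, rfl⟩ := hsplit
    · exact ⟨es₁, h₁.mono (by omega), List.subset_cons_self _ _⟩
    · exact ⟨l ++ e' :: es₁, IsConeWalk.splice (l := e :: l) h₂ h₁,
      fun _ h => by simp [h]⟩
  · obtain ⟨g, es₁, rfl⟩ := List.exists_cons_of_ne_nil hes₁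
    rcases l with _ | ⟨e₀, l⟩ <;> simp only [List.nil_append, List.cons_append,
      List.cons.injEq] at hsplit <;> obtain ⟨rfl, rfl⟩ := hsplit
    · refine ⟨e' :: g :: es₁, ?_, fun _ h => by simp [h]⟩
      simpa only [X.rev_o] using h₁.rev_cons (le_trans (by simp) h₂.2.1)
    · exact ⟨l ++ g :: es₁, IsConeWalk.splice_rev (l := e :: l) h₂ (List.cons_ne_nil _ _) h₁,
        fun _ h => by simp [h]⟩

end MGraph

/-- composition of cones: if `e'' ∈ Co_α(e')` and `e' ∈ Co_β(e)`
then `e'' ∈ Co_{α+β}(e)`. -/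
theorem stmt_5 (X : MGraph) (α β : ℕ) (e e' e'' : X.E)
    (h1 : X.InConeE (α : ℕ∞) e' e'') (h2 : X.InConeE (β : ℕ∞) e e') :
    X.InConeE ((α + β : ℕ) : ℕ∞) e e'' := by
  rw [MGraph.inConeE_iff] at h1 h2 ⊢
  obtain ⟨es₁, hw₁, hm₁⟩ := h1
  obtain ⟨es₂, hw₂, hm₂⟩ := h2
  rcases hm₁ with h | h <;> rcases List.mem_cons.1 h with rfl | h
  · exact ⟨es₂, hw₂.mono (by omega), hm₂⟩
  · obtain ⟨es, hw, hsub⟩ := MGraph.exists_isConeWalk_superset hw₂ hm₂ hw₁ (List.ne_nil_of_mem h)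
    exact ⟨es, hw, .inl (hsub h)⟩
  · refine ⟨es₂, hw₂.mono (by omega), ?_⟩
    rwa [X.rev_rev, or_comm] at hm₂
  · obtain ⟨es, hw, hsub⟩ := MGraph.exists_isConeWalk_superset hw₂ hm₂ hw₁ (List.ne_nil_of_mem h)
    exact ⟨es, hw, .inr (hsub h)⟩
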